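/- arXiv:2511.22816 — 10 statements merged into one kernel-verified Lean document; each statement's English description precedes it below -/
import Mathlib

section
/- For every c ∈ (0,1), σ > 0 and λ ∈ ℝ, the Lindley posterior probability P(n) = c·exp(−λ²/2) / (c·exp(−λ²/2) + (1−c)·σ·√(2π/n)) tends to 1 as n → ∞ (with n ranging over the positive integers or positive reals). -/
open Real Filter Topology

theorem Filter.Tendsto.div_self_add_nhds_one {α K : Type*} [DivisionRing K] [TopologicalSpace K]
    [ContinuousAdd K] [ContinuousMul K] [ContinuousInv₀ K] {l : Filter α} {a : K} {g : α → K}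
    (ha : a ≠ 0) (hg : Tendsto g l (𝓝 0)) : Tendsto (fun x => a / (a + g x)) l (𝓝 1) := by
  have hden : Tendsto (fun x => a + g x) l (𝓝 a) := by
    simpa only [add_zero] using tendsto_const_nhds.add hg
  rw [← div_self ha]
  exact (tendsto_const_nhds (x := a)).div hden ha

theorem Real.tendsto_sqrt_const_div_atTop (k : ℝ) :
    Tendsto (fun x : ℝ => √(k / x)) atTop (𝓝 0) := by
  rw [← Real.sqrt_zero]
  exact (Real.continuous_sqrt.tendsto 0).comp (tendsto_const_nhds.div_atTop tendsto_id)

theorem lindley_posterior_tendsto_one_general (c σ lam : ℝ)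
    (hc : c ∈ Set.Ioo (0 : ℝ) 1) :
    Tendsto (fun n : ℝ =>
        c * Real.exp (-lam ^ 2 / 2) /
          (c * Real.exp (-lam ^ 2 / 2) + (1 - c) * σ * Real.sqrt (2 * π / n)))
      atTop (nhds 1) := by
  have hnull : c * Real.exp (-lam ^ 2 / 2) ≠ 0 := (mul_pos hc.1 (Real.exp_pos _)).ne'
  have hsqrt := (Real.tendsto_sqrt_const_div_atTop (2 * π)).const_mul ((1 - c) * σ)
  rw [mul_zero] at hsqrt
  exact hsqrt.div_self_add_nhds_one hnull

/-- For every c ∈ (0,1), σ > 0 and λ ∈ ℝ, the Lindley posterior probability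
P(n) = c·exp(−λ²/2) / (c·exp(−λ²/2) + (1−c)·σ·√(2π/n)) tends to 1 as n → ∞. -/
theorem lindley_posterior_tendsto_one (c σ lam : ℝ)
    (hc : c ∈ Set.Ioo (0 : ℝ) 1) (hσ : 0 < σ) :
    Tendsto (fun n : ℝ =>
        c * Real.exp (-lam ^ 2 / 2) /
          (c * Real.exp (-lam ^ 2 / 2) + (1 - c) * σ * Real.sqrt (2 * π / n)))
      atTop (nhds 1) :=
  lindley_posterior_tendsto_one_general c σ lam hc
end

section
/- Let α ∈ (0,1), let z > 0 satisfy 2·(1 − Φ(z)) = α where Φ is the standard normal cumulative distribution function, and let c ∈ (0,1), σ > 0. Then there exists N such that for all n ≥ N, c·exp(−z²/2) / (c·exp(−z²/2) + (1−c)·σ·√(2π/n)) > 1 − α. Thus, for data that are exactly significant at level α for every n, the Bayesian posterior probability of the point null eventually exceeds 1 − α. -/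
/-! Holding the data at the significance boundary fixes `z`, so the weight `c e^{-z²/2}` of the
null stays constant while the weight `(1 - c) σ √(2π / n)` of the alternative tends to `0`.
Hence the posterior probability of the null tends to `1` and eventually exceeds `1 - α < 1`. -/

open Real Filter

/-- The standard normal cumulative distribution function Φ. -/
noncomputable def stdNormalCDF (z : ℝ) : ℝ :=
  ∫ t in Set.Iic z, (Real.sqrt (2 * Real.pi))⁻¹ * Real.exp (-t ^ 2 / 2)

open Topology

theorem tendsto_sqrt_div_natCast_atTop (a : ℝ) :
    Tendsto (fun n : ℕ => √(a / n)) atTop (𝓝 0) := by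
  have h := (continuous_sqrt.tendsto 0).comp
    (tendsto_const_nhds (x := a).div_atTop tendsto_natCast_atTop_atTop)
  rwa [sqrt_zero] at h

theorem tendsto_div_self_add {ι : Type*} {l : Filter ι} {a : ℝ} {b : ι → ℝ} (ha : a ≠ 0)
    (hb : Tendsto b l (𝓝 0)) : Tendsto (fun i => a / (a + b i)) l (𝓝 1) := by
  have h := (tendsto_const_nhds (x := a)).div (tendsto_const_nhds.add hb) (by simpa using ha)
  rwa [add_zero, div_self ha] at h

noncomputable def lindleyPosterior (c σ z : ℝ) (n : ℕ) : ℝ :=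
  c * exp (-z ^ 2 / 2) / (c * exp (-z ^ 2 / 2) + (1 - c) * σ * √(2 * π / n))

theorem tendsto_lindleyPosterior {c : ℝ} (hc : c ≠ 0) (σ z : ℝ) :
    Tendsto (lindleyPosterior c σ z) atTop (𝓝 1) := by
  have hsqrt := (tendsto_sqrt_div_natCast_atTop (2 * π)).const_mul ((1 - c) * σ)
  rw [mul_zero] at hsqrt
  exact tendsto_div_self_add (mul_ne_zero hc (exp_pos _).ne') hsqrt

theorem jeffreys_lindley_paradox_general (α z c σ : ℝ)
    (hα : α ∈ Set.Ioo (0 : ℝ) 1)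
    (hc : c ∈ Set.Ioo (0 : ℝ) 1) :
    ∃ N : ℕ, ∀ n : ℕ, N ≤ n →
      c * Real.exp (-z ^ 2 / 2) /
          (c * Real.exp (-z ^ 2 / 2) + (1 - c) * σ * Real.sqrt (2 * π / (n : ℝ))) > 1 - α :=
  eventually_atTop.1 <| (tendsto_lindleyPosterior hc.1.ne' σ z).eventually <|
    lt_mem_nhds (by linarith [hα.1])

/-- Let α ∈ (0,1), let z > 0 satisfy 2·(1 − Φ(z)) = α, and let c ∈ (0,1), σ > 0.
Then there exists N such that for all n ≥ N, the Lindley posterior probability of the point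
null at data just significant at level α exceeds 1 − α. -/
theorem jeffreys_lindley_paradox (α z c σ : ℝ)
    (hα : α ∈ Set.Ioo (0 : ℝ) 1) (hz : 0 < z) (hzα : 2 * (1 - stdNormalCDF z) = α)
    (hc : c ∈ Set.Ioo (0 : ℝ) 1) (hσ : 0 < σ) :
    ∃ N : ℕ, ∀ n : ℕ, N ≤ n →
      c * Real.exp (-z ^ 2 / 2) /
          (c * Real.exp (-z ^ 2 / 2) + (1 - c) * σ * Real.sqrt (2 * π / (n : ℝ))) > 1 - α :=
  jeffreys_lindley_paradox_general α z c σ hα hc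
end

section
/- For every c ∈ (0,1), σ > 0, n > 0 and every λ ∈ ℝ (i.e., for any fixed data), the Bartlett-corrected posterior probability c·exp(−λ²/2) / (c·exp(−λ²/2) + ((1−c)/I)·σ·√(2π/n)) tends to 1 as the prior interval width I → ∞. -/
open Real Filter Topology

theorem tendsto_const_div_const_add_of_tendsto_zero {𝕜 α : Type*} [NontriviallyNormedField 𝕜]
    {l : Filter α} {a : 𝕜} (ha : a ≠ 0) {g : α → 𝕜} (hg : Tendsto g l (𝓝 0)) :
    Tendsto (fun x => a / (a + g x)) l (𝓝 1) := by
  have hden : Tendsto (fun x => a + g x) l (𝓝 a) := by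
    simpa using tendsto_const_nhds.add hg
  have hquot := (tendsto_const_nhds (x := a)).div hden ha
  rwa [div_self ha] at hquot

theorem bartlett_anomaly_general (c σ n lam : ℝ)
    (hc : c ∈ Set.Ioo (0 : ℝ) 1) :
    Tendsto (fun I : ℝ =>
        c * Real.exp (-lam ^ 2 / 2) /
          (c * Real.exp (-lam ^ 2 / 2) + ((1 - c) / I) * σ * Real.sqrt (2 * π / n)))
      atTop (nhds 1) := by
  have hnull : c * Real.exp (-lam ^ 2 / 2) ≠ 0 := (mul_pos hc.1 (Real.exp_pos _)).ne'
  have hprior : Tendsto (fun I : ℝ => (1 - c) / I) atTop (𝓝 0) :=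
    tendsto_const_nhds.div_atTop tendsto_id
  refine tendsto_const_div_const_add_of_tendsto_zero hnull ?_
  simpa using (hprior.mul_const σ).mul_const (Real.sqrt (2 * π / n))

/-- For every c ∈ (0,1), σ > 0, n > 0 and λ ∈ ℝ (fixed data), the
Bartlett-corrected posterior probability
c·exp(−λ²/2) / (c·exp(−λ²/2) + ((1−c)/I)·σ·√(2π/n)) tends to 1 as I → ∞
(Bartlett's Anomaly). -/
theorem bartlett_anomaly (c σ n lam : ℝ)
    (hc : c ∈ Set.Ioo (0 : ℝ) 1) (hσ : 0 < σ) (hn : 0 < n) :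
    Tendsto (fun I : ℝ =>
        c * Real.exp (-lam ^ 2 / 2) /
          (c * Real.exp (-lam ^ 2 / 2) + ((1 - c) / I) * σ * Real.sqrt (2 * π / n)))
      atTop (nhds 1) :=
  bartlett_anomaly_general c σ n lam hc
end

section
/- For every τ > 0 and z ∈ ℝ, the normal-conjugate Bayes factor in favor of the point null, B₀₁(n) = √(1 + n·τ²) · exp(−z²·n·τ² / (2·(1 + n·τ²))), tends to +∞ as n → ∞. -/
/-!
Put `m = n τ² → ∞`. The exponent `-z² m / (2 (1 + m))` tends to `-z² / 2`, so the exponential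
factor converges to the positive constant `exp (-z² / 2)`, while `√(1 + m) → ∞`.
-/

open Real Filter Topology

theorem tendsto_div_one_add_atTop_nhds_one {𝕜 : Type*} [Field 𝕜] [LinearOrder 𝕜]
    [IsStrictOrderedRing 𝕜] [TopologicalSpace 𝕜] [OrderTopology 𝕜] :
    Tendsto (fun x : 𝕜 => x / (1 + x)) atTop (𝓝 1) := by
  have h : Tendsto (fun x : 𝕜 => 1 - (1 + x)⁻¹) atTop (𝓝 (1 - 0)) :=
    tendsto_const_nhds.sub
      (tendsto_inv_atTop_zero.comp (tendsto_atTop_add_const_left _ 1 tendsto_id))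
  rw [sub_zero] at h
  refine h.congr' ?_
  filter_upwards [eventually_ge_atTop 0] with x hx
  have : 1 + x ≠ 0 := by positivity
  field_simp
  ring

theorem tendsto_sqrt_one_add_mul_exp_neg_mul_div_one_add_atTop (c : ℝ) :
    Tendsto (fun m : ℝ => √(1 + m) * exp (-c * (m / (1 + m)))) atTop atTop := by
  have hsqrt : Tendsto (fun m : ℝ => √(1 + m)) atTop atTop :=
    tendsto_sqrt_atTop.comp (tendsto_atTop_add_const_left _ 1 tendsto_id)
  have hexp : Tendsto (fun m : ℝ => exp (-c * (m / (1 + m)))) atTop (𝓝 (exp (-c * 1))) :=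
    (continuous_exp.tendsto _).comp (tendsto_div_one_add_atTop_nhds_one.const_mul (-c))
  exact hsqrt.atTop_mul_pos (exp_pos _) hexp

/-- For every τ > 0 and z ∈ ℝ, the normal-conjugate Bayes factor in favor of
the point null, B₀₁(n) = √(1 + n·τ²)·exp(−z²·n·τ²/(2·(1 + n·τ²))), tends to +∞ as n → ∞. -/
theorem conjugate_bayes_factor_tendsto_atTop (τ z : ℝ) (hτ : 0 < τ) :
    Tendsto (fun n : ℝ =>
        Real.sqrt (1 + n * τ ^ 2) *
          Real.exp (-(z ^ 2) * (n * τ ^ 2) / (2 * (1 + n * τ ^ 2))))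
      atTop atTop := by
  have hm : Tendsto (fun n : ℝ => n * τ ^ 2) atTop atTop :=
    tendsto_id.atTop_mul_const (pow_pos hτ 2)
  refine ((tendsto_sqrt_one_add_mul_exp_neg_mul_div_one_add_atTop (z ^ 2 / 2)).comp hm).congr ?_
  intro n
  simp only [Function.comp_apply, mul_div_mul_comm, neg_div]
end

section
/- For every τ > 0 and z ∈ ℝ, the function t ↦ √(1 + t·τ²) · exp(−z²·t·τ² / (2·(1 + t·τ²))) is strictly increasing on the set of t > 0 satisfying 1 + t·τ² > z², and strictly decreasing on the set of t > 0 satisfying 1 + t·τ² < z². -/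
/-! On the scale `u = 1 + t τ²`, which increases with `t`, the Bayes factor is
`exp ((log u + z² / u - z²) / 2)`, and `u ↦ log u + z² / u` has derivative `(u - z²) / u²`. -/

open Real Set

section LogAddDiv

variable (a : ℝ)

lemma hasDerivAt_log_add_div {u : ℝ} (hu : u ≠ 0) :
    HasDerivAt (fun u => log u + a / u) ((u - a) / u ^ 2) u := by
  have h := (hasDerivAt_log hu).fun_add ((hasDerivAt_inv hu).const_mul a)
  simp only [← div_eq_mul_inv] at h
  exact h.congr_deriv (by field_simp; ring)

lemma strictMonoOn_log_add_div : StrictMonoOn (fun u => log u + a / u) (Ioi (max 0 a)) := by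
  refine strictMonoOn_of_deriv_pos (convex_Ioi _) (fun u hu => ?_) (fun u hu => ?_)
  · exact (hasDerivAt_log_add_div a (max_lt_iff.1 hu).1.ne').continuousAt.continuousWithinAt
  · rw [interior_Ioi, mem_Ioi, max_lt_iff] at hu
    obtain ⟨hu0, hua⟩ := hu
    rw [(hasDerivAt_log_add_div a hu0.ne').deriv]
    exact div_pos (sub_pos.2 hua) (by positivity)

lemma strictAntiOn_log_add_div : StrictAntiOn (fun u => log u + a / u) (Ioo 0 a) := by
  refine strictAntiOn_of_deriv_neg (convex_Ioo _ _) (fun u hu => ?_) (fun u hu => ?_)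
  · exact (hasDerivAt_log_add_div a hu.1.ne').continuousAt.continuousWithinAt
  · rw [interior_Ioo] at hu
    obtain ⟨hu0, hua⟩ := hu
    rw [(hasDerivAt_log_add_div a hu0.ne').deriv]
    exact div_neg_of_neg_of_pos (sub_neg.2 hua) (by positivity)

end LogAddDiv

lemma sqrt_one_add_mul_exp_eq (a s : ℝ) (hs : 0 < 1 + s) :
    √(1 + s) * exp (-a * s / (2 * (1 + s))) = exp ((log (1 + s) + a / (1 + s) - a) / 2) := by
  rw [sqrt_eq_rpow, rpow_def_of_pos hs, ← exp_add]
  congr 1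
  field_simp
  ring

/-- For every τ > 0 and z ∈ ℝ, the function
t ↦ √(1 + t·τ²)·exp(−z²·t·τ²/(2·(1 + t·τ²))) is strictly increasing on
{t > 0 | 1 + t·τ² > z²} and strictly decreasing on {t > 0 | 1 + t·τ² < z²}. -/
theorem conjugate_bayes_factor_monotonicity (τ z : ℝ) (hτ : 0 < τ) :
    StrictMonoOn (fun t : ℝ =>
        Real.sqrt (1 + t * τ ^ 2) *
          Real.exp (-(z ^ 2) * (t * τ ^ 2) / (2 * (1 + t * τ ^ 2))))
      {t : ℝ | 0 < t ∧ z ^ 2 < 1 + t * τ ^ 2} ∧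
    StrictAntiOn (fun t : ℝ =>
        Real.sqrt (1 + t * τ ^ 2) *
          Real.exp (-(z ^ 2) * (t * τ ^ 2) / (2 * (1 + t * τ ^ 2))))
      {t : ℝ | 0 < t ∧ 1 + t * τ ^ 2 < z ^ 2} := by
  have hu_pos {t : ℝ} (ht : 0 < t) : 0 < 1 + t * τ ^ 2 := by positivity
  have hu_lt {t t' : ℝ} (h : t < t') : 1 + t * τ ^ 2 < 1 + t' * τ ^ 2 := by gcongr
  constructor
  · rintro t ⟨ht, htz⟩ t' ⟨ht', htz'⟩ hlt
    dsimp only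
    rw [sqrt_one_add_mul_exp_eq _ _ (hu_pos ht), sqrt_one_add_mul_exp_eq _ _ (hu_pos ht')]
    gcongr exp ((?_ - _) / 2)
    exact strictMonoOn_log_add_div (z ^ 2) (max_lt (hu_pos ht) htz) (max_lt (hu_pos ht') htz')
      (hu_lt hlt)
  · rintro t ⟨ht, htz⟩ t' ⟨ht', htz'⟩ hlt
    dsimp only
    rw [sqrt_one_add_mul_exp_eq _ _ (hu_pos ht), sqrt_one_add_mul_exp_eq _ _ (hu_pos ht')]
    gcongr exp ((?_ - _) / 2)
    exact strictAntiOn_log_add_div (z ^ 2) ⟨hu_pos ht, htz⟩ ⟨hu_pos ht', htz'⟩ (hu_lt hlt)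
end

section
/- For every n > 0 and z ∈ ℝ, the normal-conjugate Bayes factor in favor of the point null, B₀₁(τ) = √(1 + n·τ²) · exp(−z²·n·τ² / (2·(1 + n·τ²))), tends to +∞ as the prior scale τ → ∞. Consequently, with equal prior odds, the posterior probability B₀₁/(1 + B₀₁) of the null tends to 1 as τ → ∞, regardless of the observed data z. -/
/-! As `τ → ∞` the exponent `-z² nτ² / (2 (1 + nτ²))` converges to `-z²/2`, so the exponential
factor stays bounded away from `0` while the Occam factor `√(1 + nτ²)` diverges. -/

open Real Filter Topology

theorem tendsto_div_const_add_atTop {𝕜 : Type*} [Field 𝕜] [LinearOrder 𝕜] [IsStrictOrderedRing 𝕜]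
    [TopologicalSpace 𝕜] [OrderTopology 𝕜] (c : 𝕜) :
    Tendsto (fun x : 𝕜 => x / (c + x)) atTop (𝓝 1) := by
  have hden : Tendsto (fun x : 𝕜 => c + x) atTop atTop := tendsto_atTop_add_const_left _ c tendsto_id
  have hlim : Tendsto (fun x : 𝕜 => 1 - c / (c + x)) atTop (𝓝 (1 - 0)) :=
    tendsto_const_nhds.sub (tendsto_const_nhds.div_atTop hden)
  rw [sub_zero] at hlim
  refine hlim.congr' ?_
  filter_upwards [hden.eventually_ne_atTop 0] with x hx
  field_simp
  ring

theorem tendsto_sqrt_one_add_mul_exp_div_atTop (c : ℝ) :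
    Tendsto (fun s : ℝ => √(1 + s) * exp (c * s / (2 * (1 + s)))) atTop atTop := by
  have hexp : Tendsto (fun s : ℝ => exp (c * s / (2 * (1 + s)))) atTop (𝓝 (exp (c / 2 * 1))) := by
    refine (continuous_exp.tendsto _).comp ?_
    simpa only [mul_div_mul_comm] using (tendsto_div_const_add_atTop (1 : ℝ)).const_mul (c / 2)
  exact (tendsto_sqrt_atTop.comp (tendsto_atTop_add_const_left _ 1 tendsto_id)).atTop_mul_pos
    (exp_pos _) hexp

/-- For every n > 0 and z ∈ ℝ, the normal-conjugate Bayes factor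
B₀₁(τ) = √(1 + n·τ²)·exp(−z²·n·τ²/(2·(1 + n·τ²))) tends to +∞ as τ → ∞, and consequently
with equal prior odds the posterior probability B₀₁/(1 + B₀₁) of the null tends to 1 as
τ → ∞, regardless of the observed data z (Bartlett's Anomaly). -/
theorem bartlett_anomaly_conjugate (n z : ℝ) (hn : 0 < n) :
    Tendsto (fun τ : ℝ =>
        Real.sqrt (1 + n * τ ^ 2) *
          Real.exp (-(z ^ 2) * (n * τ ^ 2) / (2 * (1 + n * τ ^ 2))))
      atTop atTop ∧
    Tendsto (fun τ : ℝ =>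
        (Real.sqrt (1 + n * τ ^ 2) *
            Real.exp (-(z ^ 2) * (n * τ ^ 2) / (2 * (1 + n * τ ^ 2)))) /
          (1 + Real.sqrt (1 + n * τ ^ 2) *
            Real.exp (-(z ^ 2) * (n * τ ^ 2) / (2 * (1 + n * τ ^ 2)))))
      atTop (nhds 1) := by
  have hB := (tendsto_sqrt_one_add_mul_exp_div_atTop (-(z ^ 2))).comp
    ((tendsto_pow_atTop two_ne_zero).const_mul_atTop hn)
  exact ⟨hB, (tendsto_div_const_add_atTop 1).comp hB⟩
end

section
/- Let α ∈ (0, 1/2), let z > 0 satisfy 2·(1 − Φ(z)) = α with Φ the standard normal CDF, and let τ > 0. Then there exists N such that for all n ≥ N, the equal-prior-odds posterior probability B₀₁(n)/(1 + B₀₁(n)) exceeds 1 − α, where B₀₁(n) = √(1 + n·τ²) · exp(−z²·n·τ² / (2·(1 + n·τ²))). Equivalently, B₀₁(n) > (1 − α)/α for all n ≥ N. -/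
/-!
The Bayes factor is at least `√(1 + nτ²) · exp (-z² / 2)`, because the exponent
`-z² nτ² / (2 (1 + nτ²))` never drops below `-z² / 2`. So `B₀₁(n) → ∞` and eventually
exceeds the odds threshold `(1 - α) / α`, which is equivalent to the posterior
probability `B₀₁ / (1 + B₀₁)` exceeding `1 - α`.
-/

open Real Filter

/-- `B₀₁` as a function of `t = n τ²`. -/
noncomputable def bayesFactor01 (z t : ℝ) : ℝ :=
  √(1 + t) * exp (-(z ^ 2) * t / (2 * (1 + t)))

lemma neg_sq_div_two_le_bayesFactor01_exponent (z : ℝ) {t : ℝ} (ht : 0 ≤ t) :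
    -(z ^ 2) / 2 ≤ -(z ^ 2) * t / (2 * (1 + t)) := by
  rw [div_le_div_iff₀ two_pos (by positivity)]
  nlinarith [sq_nonneg z]

lemma sqrt_one_add_mul_exp_le_bayesFactor01 (z : ℝ) {t : ℝ} (ht : 0 ≤ t) :
    √(1 + t) * exp (-(z ^ 2) / 2) ≤ bayesFactor01 z t :=
  mul_le_mul_of_nonneg_left (exp_le_exp.mpr (neg_sq_div_two_le_bayesFactor01_exponent z ht))
    (sqrt_nonneg _)

lemma tendsto_bayesFactor01_atTop (z : ℝ) : Tendsto (bayesFactor01 z) atTop atTop := by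
  have h_sqrt : Tendsto (fun t : ℝ ↦ √(1 + t)) atTop atTop :=
    tendsto_sqrt_atTop.comp (tendsto_atTop_add_const_left _ 1 tendsto_id)
  refine tendsto_atTop_mono' atTop ?_ (h_sqrt.atTop_mul_const (exp_pos (-(z ^ 2) / 2)))
  filter_upwards [eventually_ge_atTop 0] with t ht
  exact sqrt_one_add_mul_exp_le_bayesFactor01 z ht

lemma one_sub_lt_div_one_add_of_div_lt {α B : ℝ} (hα : 0 < α) (hB : (1 - α) / α < B) :
    1 - α < B / (1 + B) := by
  rw [div_lt_iff₀ hα] at hB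
  have h_pos : 0 < 1 + B := by nlinarith
  rw [lt_div_iff₀ h_pos]
  nlinarith

theorem jeffreys_lindley_conjugate_general (α z τ : ℝ)
    (hα : α ∈ Set.Ioo (0 : ℝ) (1 / 2)) (hτ : 0 < τ) :
    ∃ N : ℕ, ∀ n : ℕ, N ≤ n →
      (Real.sqrt (1 + (n : ℝ) * τ ^ 2) *
          Real.exp (-(z ^ 2) * ((n : ℝ) * τ ^ 2) / (2 * (1 + (n : ℝ) * τ ^ 2)))) /
        (1 + Real.sqrt (1 + (n : ℝ) * τ ^ 2) *
          Real.exp (-(z ^ 2) * ((n : ℝ) * τ ^ 2) / (2 * (1 + (n : ℝ) * τ ^ 2)))) > 1 - α ∧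
      Real.sqrt (1 + (n : ℝ) * τ ^ 2) *
          Real.exp (-(z ^ 2) * ((n : ℝ) * τ ^ 2) / (2 * (1 + (n : ℝ) * τ ^ 2))) >
        (1 - α) / α := by
  have h_sample : Tendsto (fun n : ℕ ↦ (n : ℝ) * τ ^ 2) atTop atTop :=
    tendsto_natCast_atTop_atTop.atTop_mul_const (by positivity)
  obtain ⟨N, hN⟩ := eventually_atTop.mp
    (((tendsto_bayesFactor01_atTop z).comp h_sample).eventually_gt_atTop ((1 - α) / α))
  exact ⟨N, fun n hn ↦ ⟨one_sub_lt_div_one_add_of_div_lt hα.1 (hN n hn), hN n hn⟩⟩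

/-- Let α ∈ (0,1/2), z > 0 with 2·(1 − Φ(z)) = α, τ > 0.  Then there is N
such that for all n ≥ N the equal-prior-odds posterior probability B₀₁(n)/(1 + B₀₁(n))
exceeds 1 − α, where B₀₁(n) = √(1 + n·τ²)·exp(−z²·n·τ²/(2·(1 + n·τ²))); equivalently,
B₀₁(n) > (1 − α)/α for all n ≥ N. -/
theorem jeffreys_lindley_conjugate (α z τ : ℝ)
    (hα : α ∈ Set.Ioo (0 : ℝ) (1 / 2)) (hz : 0 < z)
    (hzα : 2 * (1 - stdNormalCDF z) = α) (hτ : 0 < τ) :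
    ∃ N : ℕ, ∀ n : ℕ, N ≤ n →
      (Real.sqrt (1 + (n : ℝ) * τ ^ 2) *
          Real.exp (-(z ^ 2) * ((n : ℝ) * τ ^ 2) / (2 * (1 + (n : ℝ) * τ ^ 2)))) /
        (1 + Real.sqrt (1 + (n : ℝ) * τ ^ 2) *
          Real.exp (-(z ^ 2) * ((n : ℝ) * τ ^ 2) / (2 * (1 + (n : ℝ) * τ ^ 2)))) > 1 - α ∧
      Real.sqrt (1 + (n : ℝ) * τ ^ 2) *
          Real.exp (-(z ^ 2) * ((n : ℝ) * τ ^ 2) / (2 * (1 + (n : ℝ) * τ ^ 2))) >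
        (1 - α) / α :=
  jeffreys_lindley_conjugate_general α z τ hα hτ
end

section
/- For every σ > 0, I > 0 and z ∈ ℝ, the integral ∫_{−I/2}^{I/2} √(n/(2πσ²)) · exp(−n·(z·σ/√n − u)² / (2σ²)) du converges to 1 as n → ∞. Consequently, the marginal likelihood under the uniform alternative, (1/I)·∫_{−I/2}^{I/2} √(n/(2πσ²)) · exp(−n·(z·σ/√n − u)²/(2σ²)) du, converges to 1/I. -/
/-!
After the substitution `t = √n (u - zσ/√n) / σ` the integrand becomes the standard normal density,
so the integral is the standard normal mass of `[-√n I/(2σ) - z, √n I/(2σ) - z]`; both endpoints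
run off to infinity, hence the mass tends to `1`. The same argument shows that the rescaled
kernel `c g(c (· - m))` of any integrable `g` concentrates at a centre `m` converging to a point
inside the interval as `c → ∞`.
-/

open Real Filter MeasureTheory Topology ProbabilityTheory

theorem tendsto_intervalIntegral_smul_comp_mul_sub {ι E : Type*} [NormedAddCommGroup E]
    [NormedSpace ℝ E] [CompleteSpace E] {l : Filter ι} [l.IsCountablyGenerated] {g : ℝ → E}
    (hg : Integrable g) {c m : ι → ℝ} {m₀ a b : ℝ} (hc : Tendsto c l atTop) (hm : Tendsto m l (𝓝 m₀))
    (ha : a < m₀) (hb : m₀ < b) :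
    Tendsto (fun i => ∫ u in a..b, c i • g (c i * (u - m i))) l (𝓝 (∫ t, g t)) := by
  have hlower : Tendsto (fun i => c i * (a - m i)) l atBot :=
    hc.atTop_mul_neg (sub_neg.2 ha) (tendsto_const_nhds.sub hm)
  have hupper : Tendsto (fun i => c i * (b - m i)) l atTop :=
    hc.atTop_mul_pos (sub_pos.2 hb) (tendsto_const_nhds.sub hm)
  refine (intervalIntegral_tendsto_integral hg hlower hupper).congr fun i => ?_
  simp only [intervalIntegral.integral_smul, mul_sub, intervalIntegral.smul_integral_comp_mul_sub]

theorem sqrt_mul_exp_eq_mul_gaussianPDFReal {n σ : ℝ} (hn : 0 < n) (hσ : 0 < σ) (z u : ℝ) :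
    √(n / (2 * π * σ ^ 2)) * exp (-n * (z * σ / √n - u) ^ 2 / (2 * σ ^ 2)) =
      √n / σ * gaussianPDFReal 0 1 (√n / σ * (u - z * σ / √n)) := by
  have hsn : 0 < √n := sqrt_pos.2 hn
  have hcoef : √(n / (2 * π * σ ^ 2)) = √n / σ * (√(2 * π))⁻¹ := by
    rw [sqrt_div' _ (by positivity), sqrt_mul' _ (sq_nonneg σ), sqrt_sq hσ.le]
    field_simp
  rw [gaussianPDFReal, hcoef]
  simp only [NNReal.coe_one, mul_one, sub_zero, mul_assoc]
  congr 3
  field_simp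
  rw [sq_sqrt hn.le]
  ring

/-- For every σ > 0, I > 0 and z ∈ ℝ, the integral
∫_{−I/2}^{I/2} √(n/(2πσ²))·exp(−n·(z·σ/√n − u)²/(2σ²)) du converges to 1 as n → ∞;
consequently the marginal likelihood under the uniform alternative,
(1/I) times this integral, converges to 1/I. -/
theorem laplace_marginal_uniform (σ I z : ℝ) (hσ : 0 < σ) (hI : 0 < I) :
    Tendsto (fun n : ℝ =>
        ∫ u in (-(I / 2))..(I / 2),
          Real.sqrt (n / (2 * π * σ ^ 2)) *
            Real.exp (-n * (z * σ / Real.sqrt n - u) ^ 2 / (2 * σ ^ 2)))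
      atTop (nhds 1) ∧
    Tendsto (fun n : ℝ =>
        (1 / I) * ∫ u in (-(I / 2))..(I / 2),
          Real.sqrt (n / (2 * π * σ ^ 2)) *
            Real.exp (-n * (z * σ / Real.sqrt n - u) ^ 2 / (2 * σ ^ 2)))
      atTop (nhds (1 / I)) := by
  have hc : Tendsto (fun n : ℝ => √n / σ) atTop atTop := tendsto_sqrt_atTop.atTop_div_const hσ
  have hm : Tendsto (fun n : ℝ => z * σ / √n) atTop (𝓝 0) :=
    tendsto_const_nhds.div_atTop tendsto_sqrt_atTop
  have hmass := tendsto_intervalIntegral_smul_comp_mul_sub (integrable_gaussianPDFReal 0 1) hc hm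
    (neg_neg_of_pos (half_pos hI)) (half_pos hI)
  rw [integral_gaussianPDFReal_eq_one 0 one_ne_zero] at hmass
  have hlim : Tendsto (fun n : ℝ => ∫ u in (-(I / 2))..(I / 2),
      √(n / (2 * π * σ ^ 2)) * exp (-n * (z * σ / √n - u) ^ 2 / (2 * σ ^ 2))) atTop (𝓝 1) := by
    refine hmass.congr' ?_
    filter_upwards [eventually_gt_atTop 0] with n hn
    simp only [smul_eq_mul, sqrt_mul_exp_eq_mul_gaussianPDFReal hn hσ]
  exact ⟨hlim, by simpa using hlim.const_mul (1 / I)⟩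
end

section
/- Let σ > 0, δ > 0, z ∈ ℝ, θ₀ ∈ ℝ. Let π₀ : ℝ → ℝ be nonnegative, integrable, continuous at θ₀ with π₀(θ₀) > 0, and let π₁ : ℝ → ℝ be nonnegative and integrable. Set x̄ₙ = θ₀ + z·σ/√n and Lₙ(θ) = exp(−n·(x̄ₙ − θ)²/(2σ²)). Then the interval-null Bayes factor B₀₁(n) = (∫_{θ₀−δ}^{θ₀+δ} Lₙ(θ)·π₀(θ) dθ) / (∫_{|θ−θ₀|>δ} Lₙ(θ)·π₁(θ) dθ) tends to +∞ as n → ∞ (with the convention that the ratio is +∞ when the denominator is 0 and the numerator is positive). -/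
/-!
Write `x̄ₙ = θ₀ + wₙ` with `wₙ = zσ/√n → 0`. Pick `η < δ/4` so small that `π₀ ≥ π₀(θ₀)/2`
on `[θ₀ - η, θ₀ + η]`. Once `|wₙ| ≤ η`, every `θ` in that interval has `|x̄ₙ - θ| ≤ 2η`, while
every `θ` with `|θ - θ₀| > δ` has `|x̄ₙ - θ| ≥ δ/2`. Hence the numerator is at least a constant
times `exp(-n(2η)²/(2σ²))` and the denominator at most `(∫ π₁) exp(-n(δ/2)²/(2σ²))`; since
`2η < δ/2`, the ratio grows exponentially.
-/

open Real Filter MeasureTheory Topology Set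

theorem ContinuousAt.exists_forall_mem_Icc_le {f : ℝ → ℝ} {a c ρ : ℝ} (hf : ContinuousAt f a)
    (hc : c < f a) (hρ : 0 < ρ) :
    ∃ η, 0 < η ∧ η < ρ ∧ ∀ θ ∈ Icc (a - η) (a + η), c ≤ f θ := by
  obtain ⟨ε, hε, hball⟩ :=
    Metric.nhds_basis_closedBall.eventually_iff.mp (hf.eventually (eventually_ge_nhds hc))
  refine ⟨min ε (ρ / 2), by positivity, (min_le_right _ _).trans_lt (half_lt_self hρ), ?_⟩
  intro θ hθ
  rw [← Real.closedBall_eq_Icc] at hθ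
  exact hball (Metric.closedBall_subset_closedBall (min_le_left _ _) hθ)

theorem exp_neg_mul_sq_div_le_of_abs_le {n c d e : ℝ} (hn : 0 ≤ n) (hc : 0 ≤ c) (h : |d| ≤ |e|) :
    exp (-n * e ^ 2 / c) ≤ exp (-n * d ^ 2 / c) := by
  have hde : n * d ^ 2 ≤ n * e ^ 2 := mul_le_mul_of_nonneg_left (sq_le_sq.mpr h) hn
  exact exp_le_exp.mpr (div_le_div_of_nonneg_right (by linarith) hc)

theorem integrable_exp_neg_mul_sq_div_mul {μ : Measure ℝ} {p : ℝ → ℝ} {n c x : ℝ} (hn : 0 ≤ n)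
    (hc : 0 ≤ c) (hp : Integrable p μ) :
    Integrable (fun θ => exp (-n * (x - θ) ^ 2 / c) * p θ) μ := by
  have hL : Continuous fun θ => exp (-n * (x - θ) ^ 2 / c) := by fun_prop
  refine hp.bdd_mul (c := 1) hL.aestronglyMeasurable (Eventually.of_forall fun θ => ?_)
  rw [Real.norm_of_nonneg (exp_pos _).le, exp_le_one_iff]
  exact div_nonpos_of_nonpos_of_nonneg (by nlinarith [sq_nonneg (x - θ)]) hc

theorem mul_le_intervalIntegral_of_le_on {f : ℝ → ℝ} {a η δ m : ℝ} (hη : 0 ≤ η) (hηδ : η ≤ δ)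
    (hf : IntervalIntegrable f volume (a - δ) (a + δ)) (hf0 : ∀ θ, 0 ≤ f θ)
    (hm : ∀ θ ∈ Icc (a - η) (a + η), m ≤ f θ) :
    2 * η * m ≤ ∫ θ in (a - δ)..(a + δ), f θ :=
  calc 2 * η * m = ∫ _ in (a - η)..(a + η), m := by
        rw [intervalIntegral.integral_const, smul_eq_mul]; ring
    _ ≤ ∫ θ in (a - η)..(a + η), f θ :=
        intervalIntegral.integral_mono_on (by linarith) intervalIntegrable_const
          (hf.mono_set (uIcc_subset_uIcc
            (by rw [uIcc_of_le (by linarith)]; constructor <;> linarith)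
            (by rw [uIcc_of_le (by linarith)]; constructor <;> linarith))) hm
    _ ≤ ∫ θ in (a - δ)..(a + δ), f θ :=
        intervalIntegral.integral_mono_interval (by linarith) (by linarith) (by linarith)
          (Eventually.of_forall hf0) hf

theorem setIntegral_mul_le_mul_integral {α : Type*} [MeasurableSpace α] {μ : Measure α}
    {L p : α → ℝ} {S : Set α} {M : ℝ} (hS : MeasurableSet S) (hp : Integrable p μ)
    (hp0 : ∀ θ, 0 ≤ p θ) (hLp : IntegrableOn (fun θ => L θ * p θ) S μ) (hM : 0 ≤ M)
    (hLM : ∀ θ ∈ S, L θ ≤ M) :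
    ∫ θ in S, L θ * p θ ∂μ ≤ M * ∫ θ, p θ ∂μ :=
  calc ∫ θ in S, L θ * p θ ∂μ ≤ ∫ θ in S, M * p θ ∂μ :=
        setIntegral_mono_on hLp (hp.const_mul M).integrableOn hS
          fun θ hθ => mul_le_mul_of_nonneg_right (hLM θ hθ) (hp0 θ)
    _ = M * ∫ θ in S, p θ ∂μ := integral_const_mul M _
    _ ≤ M * ∫ θ, p θ ∂μ :=
        mul_le_mul_of_nonneg_left (setIntegral_le_integral hp (Eventually.of_forall hp0)) hM

theorem tendsto_ofReal_div_ofReal_of_exp_bounds {f g : ℝ → ℝ} {A B α β : ℝ} (hA : 0 < A)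
    (hαβ : α < β) (hf : ∀ᶠ n in atTop, A * exp (-n * α) ≤ f n)
    (hg : ∀ᶠ n in atTop, g n ≤ B * exp (-n * β)) :
    Tendsto (fun n => ENNReal.ofReal (f n) / ENNReal.ofReal (g n)) atTop (𝓝 ⊤) := by
  set B' := max B 1
  have hB' : 0 < B' := lt_max_of_lt_right one_pos
  have hlim : Tendsto (fun n => ENNReal.ofReal (A / B' * exp (n * (β - α)))) atTop (𝓝 ⊤) :=
    ENNReal.tendsto_ofReal_atTop.comp <| Tendsto.const_mul_atTop (by positivity) <|
      tendsto_exp_atTop.comp (tendsto_id.atTop_mul_const (sub_pos.mpr hαβ))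
  refine tendsto_nhds_top_mono hlim ?_
  filter_upwards [hf, hg] with n hfn hgn
  have hgn' : g n ≤ B' * exp (-n * β) :=
    hgn.trans (mul_le_mul_of_nonneg_right (le_max_left _ _) (exp_pos _).le)
  calc ENNReal.ofReal (A / B' * exp (n * (β - α)))
      = ENNReal.ofReal (A * exp (-n * α)) / ENNReal.ofReal (B' * exp (-n * β)) := by
        rw [← ENNReal.ofReal_div_of_pos (by positivity), mul_div_mul_comm, ← exp_sub]
        congr 3
        ring
    _ ≤ ENNReal.ofReal (f n) / ENNReal.ofReal (g n) :=
        ENNReal.div_le_div (ENNReal.ofReal_le_ofReal hfn) (ENNReal.ofReal_le_ofReal hgn')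

/-- With σ > 0, δ > 0, z ∈ ℝ, θ₀ ∈ ℝ, π₀ nonnegative, integrable, continuous
at θ₀ with π₀(θ₀) > 0, π₁ nonnegative and integrable, x̄ₙ = θ₀ + z·σ/√n and
Lₙ(θ) = exp(−n·(x̄ₙ − θ)²/(2σ²)), the interval-null Bayes factor
B₀₁(n) = (∫_{θ₀−δ}^{θ₀+δ} Lₙ·π₀) / (∫_{|θ−θ₀|>δ} Lₙ·π₁) tends to +∞ as n → ∞.
The quotient is taken in ℝ≥0∞ (via `ENNReal.ofReal`), so that the ratio is +∞ whenever
the denominator is 0 and the numerator is positive, as in the stated convention. -/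
theorem interval_null_bayes_factor_tendsto_top (σ δ z θ₀ : ℝ)
    (hσ : 0 < σ) (hδ : 0 < δ) (π₀ π₁ : ℝ → ℝ)
    (hπ₀nonneg : ∀ θ, 0 ≤ π₀ θ) (hπ₀int : Integrable π₀)
    (hπ₀cont : ContinuousAt π₀ θ₀) (hπ₀pos : 0 < π₀ θ₀)
    (hπ₁nonneg : ∀ θ, 0 ≤ π₁ θ) (hπ₁int : Integrable π₁) :
    Tendsto (fun n : ℝ =>
        ENNReal.ofReal (∫ θ in (θ₀ - δ)..(θ₀ + δ),
            Real.exp (-n * ((θ₀ + z * σ / Real.sqrt n) - θ) ^ 2 / (2 * σ ^ 2)) * π₀ θ) /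
        ENNReal.ofReal (∫ θ in {θ : ℝ | δ < |θ - θ₀|},
            Real.exp (-n * ((θ₀ + z * σ / Real.sqrt n) - θ) ^ 2 / (2 * σ ^ 2)) * π₁ θ))
      atTop (nhds (⊤ : ENNReal)) := by
  obtain ⟨η, hη, hηδ, hπ₀η⟩ :=
    hπ₀cont.exists_forall_mem_Icc_le (half_lt_self hπ₀pos) (by positivity : 0 < δ / 4)
  have hc : 0 < 2 * σ ^ 2 := by positivity
  have hshift : ∀ᶠ n : ℝ in atTop, 0 ≤ n ∧ |z * σ / √n| ≤ η :=
    (eventually_ge_atTop 0).and <| (tendsto_const_nhds.div_atTop tendsto_sqrt_atTop).abs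
      |>.eventually (eventually_le_nhds (by simpa using hη))
  refine tendsto_ofReal_div_ofReal_of_exp_bounds (A := 2 * η * (π₀ θ₀ / 2))
    (B := ∫ θ, π₁ θ) (α := (2 * η) ^ 2 / (2 * σ ^ 2)) (β := (δ / 2) ^ 2 / (2 * σ ^ 2))
    (by positivity) (div_lt_div_of_pos_right (by gcongr; linarith) hc) ?_ ?_
  · filter_upwards [hshift] with n ⟨hn, hw⟩
    rw [mul_assoc, mul_div_assoc', mul_comm (π₀ θ₀ / 2)]
    refine mul_le_intervalIntegral_of_le_on hη.le (by linarith)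
      (integrable_exp_neg_mul_sq_div_mul hn hc.le hπ₀int).intervalIntegrable
      (fun θ => mul_nonneg (exp_pos _).le (hπ₀nonneg θ)) fun θ hθ => ?_
    refine mul_le_mul (exp_neg_mul_sq_div_le_of_abs_le hn hc.le ?_) (hπ₀η θ hθ)
      (by positivity) (exp_pos _).le
    rw [abs_of_pos (by positivity : 0 < 2 * η), abs_le]
    rw [abs_le] at hw
    constructor <;> linarith [hθ.1, hθ.2]
  · filter_upwards [hshift] with n ⟨hn, hw⟩
    rw [mul_comm (∫ θ, π₁ θ), mul_div_assoc']
    have hS : MeasurableSet {θ : ℝ | δ < |θ - θ₀|} :=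
      measurableSet_lt measurable_const (by fun_prop)
    refine setIntegral_mul_le_mul_integral hS hπ₁int hπ₁nonneg
      (integrable_exp_neg_mul_sq_div_mul hn hc.le hπ₁int).integrableOn
      (exp_pos _).le fun θ hθ => exp_neg_mul_sq_div_le_of_abs_le hn hc.le ?_
    rw [abs_of_pos (by positivity : 0 < δ / 2)]
    rw [abs_le] at hw
    rcases lt_abs.mp (show δ < |θ - θ₀| from hθ) with h | h
    · exact le_abs.mpr (Or.inr (by linarith))
    · exact le_abs.mpr (Or.inl (by linarith))
end

section
/- Under the hypotheses of the interval-null asymptotic theorem (σ > 0, δ > 0, z ∈ ℝ, π₀ nonnegative, integrable, continuous and positive at θ₀, π₁ nonnegative and integrable, x̄ₙ = θ₀ + z·σ/√n, Lₙ(θ) = exp(−n·(x̄ₙ − θ)²/(2σ²))), and for every prior probability c ∈ (0,1) of H₀, the posterior probability c·B₀₁(n) / (c·B₀₁(n) + (1 − c)) converges to 1 as n → ∞, where B₀₁(n) = (∫_{θ₀−δ}^{θ₀+δ} Lₙ·π₀) / (∫_{|θ−θ₀|>δ} Lₙ·π₁). -/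
open Real Filter MeasureTheory Set Topology

/-!
On the window `|θ - x̄ₙ| ≤ σ/√n`, which shrinks to `θ₀`, the likelihood is at least `e^{-1/2}`
and `π₀` stays above `π₀ θ₀ / 2`, so the `H₀` integral is at least `C/√n`. Once
`|x̄ₙ - θ₀| < δ/2`, every `θ` with `|θ - θ₀| > δ` has `|θ - x̄ₙ| > δ/2`, so the `H₁` integral is
`O(e^{-kn})`. Hence the ratio of the two integrals tends to `0`, and the posterior
probability `c / (c + (1 - c) · ratio)` tends to `1`.
-/

/-- The paper's likelihood `Lₙ(θ)`, with `x` the observed sample mean. -/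
noncomputable def normalLik (σ n x θ : ℝ) : ℝ :=
  Real.exp (-n * (x - θ) ^ 2 / (2 * σ ^ 2))

section normalLik

variable {σ n x θ : ℝ}

theorem continuous_normalLik : Continuous (normalLik σ n x) := by
  unfold normalLik
  fun_prop

theorem normalLik_pos : 0 < normalLik σ n x θ :=
  exp_pos _

theorem normalLik_le_exp_of_le_abs {r : ℝ} (hn : 0 ≤ n) (hr : 0 ≤ r) (h : r ≤ |x - θ|) :
    normalLik σ n x θ ≤ Real.exp (-n * r ^ 2 / (2 * σ ^ 2)) := by
  have hsq : r ^ 2 ≤ (x - θ) ^ 2 := by simpa only [sq_abs] using pow_le_pow_left₀ hr h 2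
  unfold normalLik
  rw [neg_mul, neg_div, neg_mul, neg_div]
  gcongr

theorem normalLik_le_one (hn : 0 ≤ n) : normalLik σ n x θ ≤ 1 := by
  simpa using normalLik_le_exp_of_le_abs (σ := σ) hn le_rfl (abs_nonneg (x - θ))

theorem exp_neg_half_le_normalLik (hσ : 0 < σ) (hn : 0 < n) (h : |x - θ| ≤ σ / √n) :
    Real.exp (-(1 / 2)) ≤ normalLik σ n x θ := by
  have hsq : n * (x - θ) ^ 2 ≤ σ ^ 2 := by
    have := pow_le_pow_left₀ (abs_nonneg _) h 2
    rw [sq_abs, div_pow, sq_sqrt hn.le, le_div_iff₀ hn] at this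
    linarith
  unfold normalLik
  gcongr
  rw [neg_mul, neg_div, neg_le_neg_iff, div_le_iff₀ (by positivity)]
  linarith

theorem integrableOn_normalLik_mul {p : ℝ → ℝ} {S : Set ℝ} (hp : IntegrableOn p S)
    (hn : 0 ≤ n) : IntegrableOn (fun θ => normalLik σ n x θ * p θ) S :=
  hp.bdd_mul continuous_normalLik.aestronglyMeasurable
    (ae_of_all _ fun _ => (norm_of_nonneg normalLik_pos.le).trans_le (normalLik_le_one hn))

end normalLik

section integrals

variable {σ n x : ℝ} {p : ℝ → ℝ}

theorem le_intervalIntegral_normalLik_mul {a b β : ℝ} (hσ : 0 < σ) (hn : 0 < n)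
    (ha : a ≤ x - σ / √n) (hb : x + σ / √n ≤ b) (hp : IntervalIntegrable p volume a b)
    (hp0 : ∀ θ ∈ Icc a b, 0 ≤ p θ) (hβ : ∀ θ ∈ Icc (x - σ / √n) (x + σ / √n), β ≤ p θ) :
    2 * σ * Real.exp (-(1 / 2)) * β / √n ≤ ∫ θ in a..b, normalLik σ n x θ * p θ := by
  set w := σ / √n with hw_def
  have hw : 0 < w := div_pos hσ (sqrt_pos.2 hn)
  have hint : IntervalIntegrable (fun θ => normalLik σ n x θ * p θ) volume a b :=
    hp.continuousOn_mul continuous_normalLik.continuousOn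
  have hint' : IntervalIntegrable (fun θ => normalLik σ n x θ * p θ) volume (x - w) (x + w) :=
    hint.mono_set <| by
      rw [uIcc_of_le (by linarith), uIcc_of_le (by linarith)]
      exact Icc_subset_Icc ha hb
  calc 2 * σ * Real.exp (-(1 / 2)) * β / √n
      = ∫ _ in (x - w)..(x + w), Real.exp (-(1 / 2)) * β := by
        rw [intervalIntegral.integral_const, smul_eq_mul, hw_def]
        ring
    _ ≤ ∫ θ in (x - w)..(x + w), normalLik σ n x θ * p θ := by
        refine intervalIntegral.integral_mono_on (by linarith) intervalIntegrable_const hint'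
          fun θ hθ => ?_
        have hθx : |x - θ| ≤ w := abs_le.mpr ⟨by linarith [hθ.2], by linarith [hθ.1]⟩
        have hpθ : 0 ≤ p θ := hp0 θ ⟨by linarith [hθ.1], by linarith [hθ.2]⟩
        calc Real.exp (-(1 / 2)) * β ≤ Real.exp (-(1 / 2)) * p θ :=
              mul_le_mul_of_nonneg_left (hβ θ hθ) (exp_pos _).le
          _ ≤ normalLik σ n x θ * p θ :=
              mul_le_mul_of_nonneg_right (exp_neg_half_le_normalLik hσ hn hθx) hpθ
    _ ≤ ∫ θ in a..b, normalLik σ n x θ * p θ := by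
        refine intervalIntegral.integral_mono_interval ha (by linarith) hb ?_ hint
        exact (ae_restrict_of_forall_mem measurableSet_Ioc fun θ hθ =>
          mul_nonneg normalLik_pos.le (hp0 θ (Ioc_subset_Icc_self hθ)))

theorem setIntegral_normalLik_mul_le {r : ℝ} {S : Set ℝ} (hn : 0 ≤ n) (hr : 0 ≤ r)
    (hS : MeasurableSet S) (hp : IntegrableOn p S) (hp0 : ∀ θ ∈ S, 0 ≤ p θ)
    (hrS : ∀ θ ∈ S, r ≤ |x - θ|) :
    ∫ θ in S, normalLik σ n x θ * p θ ≤
      Real.exp (-n * r ^ 2 / (2 * σ ^ 2)) * ∫ θ in S, p θ := by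
  rw [← integral_const_mul]
  exact setIntegral_mono_on (integrableOn_normalLik_mul hp hn) (hp.const_mul _) hS fun θ hθ =>
    mul_le_mul_of_nonneg_right (normalLik_le_exp_of_le_abs hn hr (hrS θ hθ)) (hp0 θ hθ)

end integrals

section asymptotics

variable {σ δ θ₀ : ℝ} {x p : ℝ → ℝ}

theorem exists_eventually_div_sqrt_le_intervalIntegral (hσ : 0 < σ) (hδ : 0 < δ)
    (hx : Tendsto x atTop (𝓝 θ₀)) (hp : IntervalIntegrable p volume (θ₀ - δ) (θ₀ + δ))
    (hp0 : ∀ θ ∈ Icc (θ₀ - δ) (θ₀ + δ), 0 ≤ p θ) (hpc : ContinuousAt p θ₀) (hpθ₀ : 0 < p θ₀) :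
    ∃ C > 0, ∀ᶠ n in atTop,
      C / √n ≤ ∫ θ in (θ₀ - δ)..(θ₀ + δ), normalLik σ n (x n) θ * p θ := by
  obtain ⟨ε, hε, hpε⟩ :=
    Metric.eventually_nhds_iff.mp (hpc.eventually (lt_mem_nhds (half_lt_self hpθ₀)))
  have hw : Tendsto (fun n => |x n - θ₀| + σ / √n) atTop (𝓝 0) := by
    simpa using ((hx.sub_const θ₀).abs).add (tendsto_const_nhds.div_atTop tendsto_sqrt_atTop)
  refine ⟨2 * σ * Real.exp (-(1 / 2)) * (p θ₀ / 2), by positivity, ?_⟩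
  filter_upwards [hw.eventually (gt_mem_nhds (lt_min hδ hε)), eventually_gt_atTop 0]
    with n hn hn0
  have hδn := hn.trans_le (min_le_left _ _)
  have hεn := hn.trans_le (min_le_right _ _)
  have hle := le_abs_self (x n - θ₀)
  have hge := neg_abs_le (x n - θ₀)
  refine le_intervalIntegral_normalLik_mul hσ hn0 (by linarith) (by linarith) hp hp0
    fun θ hθ => (hpε ?_).le
  rw [Real.dist_eq, abs_lt]
  constructor <;> linarith [hθ.1, hθ.2]

theorem exists_eventually_setIntegral_le_exp_mul (hσ : σ ≠ 0) (hδ : 0 < δ)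
    (hx : Tendsto x atTop (𝓝 θ₀)) (hp : IntegrableOn p {θ | δ < |θ - θ₀|})
    (hp0 : ∀ θ ∈ {θ | δ < |θ - θ₀|}, 0 ≤ p θ) :
    ∃ k > 0, ∀ᶠ n in atTop,
      ∫ θ in {θ | δ < |θ - θ₀|}, normalLik σ n (x n) θ * p θ ≤
        Real.exp (-k * n) * ∫ θ in {θ | δ < |θ - θ₀|}, p θ := by
  have hS : MeasurableSet {θ | δ < |θ - θ₀|} :=
    (isOpen_lt continuous_const (by fun_prop)).measurableSet
  refine ⟨(δ / 2) ^ 2 / (2 * σ ^ 2), by positivity, ?_⟩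
  filter_upwards [Metric.tendsto_nhds.mp hx (δ / 2) (half_pos hδ), eventually_ge_atTop 0]
    with n hn hn0
  rw [Real.dist_eq] at hn
  calc ∫ θ in {θ | δ < |θ - θ₀|}, normalLik σ n (x n) θ * p θ
      ≤ Real.exp (-n * (δ / 2) ^ 2 / (2 * σ ^ 2)) * ∫ θ in {θ | δ < |θ - θ₀|}, p θ := by
        refine setIntegral_normalLik_mul_le hn0 (by positivity) hS hp hp0 fun θ hθ => ?_
        have := abs_sub_le θ (x n) θ₀
        rw [abs_sub_comm θ (x n)] at this
        linarith [hθ.out]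
    _ = Real.exp (-((δ / 2) ^ 2 / (2 * σ ^ 2)) * n) * ∫ θ in {θ | δ < |θ - θ₀|}, p θ := by
        congr 2
        ring

end asymptotics

theorem tendsto_div_of_le_exp_mul_of_div_sqrt_le {N D : ℝ → ℝ} {C k I : ℝ} (hC : 0 < C)
    (hk : 0 < k) (hN : ∀ᶠ n in atTop, C / √n ≤ N n) (hD0 : ∀ᶠ n in atTop, 0 ≤ D n)
    (hD : ∀ᶠ n in atTop, D n ≤ Real.exp (-k * n) * I) :
    Tendsto (fun n => D n / N n) atTop (𝓝 0) := by
  have hlim : Tendsto (fun n => I / C * (√n * Real.exp (-k * n))) atTop (𝓝 0) := by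
    simpa only [sqrt_eq_rpow, mul_zero] using
      (tendsto_rpow_mul_exp_neg_mul_atTop_nhds_zero (1 / 2) k hk).const_mul (I / C)
  refine squeeze_zero' ?_ ?_ hlim
  · filter_upwards [hN, hD0, eventually_gt_atTop 0] with n hN hD0 hn
    exact div_nonneg hD0 ((div_pos hC (sqrt_pos.2 hn)).le.trans hN)
  · filter_upwards [hN, hD0, hD, eventually_gt_atTop 0] with n hN hD0 hD hn
    calc D n / N n ≤ Real.exp (-k * n) * I / (C / √n) :=
          div_le_div₀ (hD0.trans hD) hD (div_pos hC (sqrt_pos.2 hn)) hN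
      _ = I / C * (√n * Real.exp (-k * n)) := by field_simp

theorem tendsto_mul_div_mul_add_mul_of_tendsto_div {α : Type*} {l : Filter α} {N D : α → ℝ}
    {b c : ℝ} (hc : c ≠ 0) (hN : ∀ᶠ t in l, N t ≠ 0)
    (h : Tendsto (fun t => D t / N t) l (𝓝 0)) :
    Tendsto (fun t => c * N t / (c * N t + b * D t)) l (𝓝 1) := by
  have hlim : Tendsto (fun t => c / (c + b * (D t / N t))) l (𝓝 (c / (c + b * 0))) :=
    tendsto_const_nhds.div (tendsto_const_nhds.add (h.const_mul b)) (by simpa using hc)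
  rw [mul_zero, add_zero, div_self hc] at hlim
  refine hlim.congr' ?_
  filter_upwards [hN] with t ht
  rw [← mul_div_mul_right c _ ht, add_mul, mul_assoc, div_mul_cancel₀ _ ht]

/-- Under the hypotheses of the interval-null asymptotic theorem and for every
prior probability c ∈ (0,1) of H₀, the posterior probability c·B₀₁(n)/(c·B₀₁(n) + (1 − c))
converges to 1 as n → ∞, where B₀₁(n) = (∫_{θ₀−δ}^{θ₀+δ} Lₙ·π₀)/(∫_{|θ−θ₀|>δ} Lₙ·π₁).
Writing num(n) and den(n) for the two integrals, the posterior probability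
c·B₀₁/(c·B₀₁ + (1 − c)) is expressed in the equivalent form
c·num/(c·num + (1 − c)·den), which agrees with it whenever den > 0 and equals 1 when
den = 0 and num > 0, matching the convention B₀₁ = +∞ in that case. -/
theorem interval_null_posterior_tendsto_one (σ δ z θ₀ c : ℝ)
    (hσ : 0 < σ) (hδ : 0 < δ) (hc : c ∈ Set.Ioo (0 : ℝ) 1) (π₀ π₁ : ℝ → ℝ)
    (hπ₀nonneg : ∀ θ, 0 ≤ π₀ θ) (hπ₀int : Integrable π₀)
    (hπ₀cont : ContinuousAt π₀ θ₀) (hπ₀pos : 0 < π₀ θ₀)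
    (hπ₁nonneg : ∀ θ, 0 ≤ π₁ θ) (hπ₁int : Integrable π₁) :
    Tendsto (fun n : ℝ =>
        c * (∫ θ in (θ₀ - δ)..(θ₀ + δ),
            Real.exp (-n * ((θ₀ + z * σ / Real.sqrt n) - θ) ^ 2 / (2 * σ ^ 2)) * π₀ θ) /
        (c * (∫ θ in (θ₀ - δ)..(θ₀ + δ),
            Real.exp (-n * ((θ₀ + z * σ / Real.sqrt n) - θ) ^ 2 / (2 * σ ^ 2)) * π₀ θ) +
          (1 - c) * ∫ θ in {θ : ℝ | δ < |θ - θ₀|},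
            Real.exp (-n * ((θ₀ + z * σ / Real.sqrt n) - θ) ^ 2 / (2 * σ ^ 2)) * π₁ θ))
      atTop (nhds 1) := by
  have hx : Tendsto (fun n : ℝ => θ₀ + z * σ / √n) atTop (𝓝 θ₀) := by
    simpa using tendsto_const_nhds.add (tendsto_const_nhds.div_atTop tendsto_sqrt_atTop)
  obtain ⟨C, hC, hnum⟩ := exists_eventually_div_sqrt_le_intervalIntegral hσ hδ hx
    hπ₀int.intervalIntegrable (fun θ _ => hπ₀nonneg θ) hπ₀cont hπ₀pos
  obtain ⟨k, hk, htail⟩ := exists_eventually_setIntegral_le_exp_mul hσ.ne' hδ hx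
    hπ₁int.integrableOn fun θ _ => hπ₁nonneg θ
  have htail0 : ∀ᶠ n : ℝ in atTop, 0 ≤ ∫ θ in {θ | δ < |θ - θ₀|},
      normalLik σ n (θ₀ + z * σ / √n) θ * π₁ θ :=
    Eventually.of_forall fun _ => integral_nonneg fun θ =>
      mul_nonneg normalLik_pos.le (hπ₁nonneg θ)
  have hnum0 : ∀ᶠ n : ℝ in atTop, ∫ θ in (θ₀ - δ)..(θ₀ + δ),
      normalLik σ n (θ₀ + z * σ / √n) θ * π₀ θ ≠ 0 := by
    filter_upwards [hnum, eventually_gt_atTop 0] with n h hn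
    exact ((div_pos hC (sqrt_pos.2 hn)).trans_le h).ne'
  exact tendsto_mul_div_mul_add_mul_of_tendsto_div hc.1.ne' hnum0
    (tendsto_div_of_le_exp_mul_of_div_sqrt_le hC hk hnum htail0 htail)
end
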